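/- The conditional superposition rule Sup_C is sound with respect to answer-clause semantics: if I satisfies the universal closures of (l ≈ r ∨ C) ∨ F[ᾱ, p] and (s[l'] ≐ t ∨ D) ∨ F[ᾱ, q], and σ = mgu(l, l'), then I satisfies the universal closure of (s[r] ≐ t ∨ C ∨ D)σ ∨ F[ᾱ, ite(l ≈ r, q, p)σ], where ite(G, q, p) denotes a conditional term interpreted as q when G holds and as p otherwise. -/

import Mathlib

/-- First-order terms over function symbols `F` and variables `V`. -/
inductive Term (F V : Type) : Type where
  | var : V → Term F V
  | app : F → List (Term F V) → Term F V

/-- An interpretation: a nonempty domain together with interpretations of the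
function symbols. -/
structure Interp (F : Type) where
  D : Type
  default : D
  fn : F → List D → D

/-- Evaluation of a term in an interpretation under a variable assignment. -/
def evalT {F V : Type} (I : Interp F) (v : V → I.D) : Term F V → I.D
  | Term.var x => v x
  | Term.app f ts => I.fn f (ts.attach.map fun t => evalT I v t.1)
decreasing_by
  have := List.sizeOf_lt_of_mem t.2
  simp only [Term.app.sizeOf_spec] at *
  omega

/-- An equational literal: a sign (`true` = equation, `false` = disequation)
together with the two sides. -/
abbrev Lit (F V : Type) := Bool × Term F V × Term F V

/-- A clause: a finite disjunction (list) of literals. -/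
abbrev Clause (F V : Type) := List (Lit F V)

/-- Truth of a literal in `I` under assignment `v`. -/
def litSat {F V : Type} (I : Interp F) (v : V → I.D) (l : Lit F V) : Prop :=
  if l.1 then evalT I v l.2.1 = evalT I v l.2.2
  else evalT I v l.2.1 ≠ evalT I v l.2.2

/-- Truth of a clause in `I` under assignment `v`: some literal is true. -/
def clauseSat {F V : Type} (I : Interp F) (v : V → I.D) (C : Clause F V) : Prop :=
  ∃ l ∈ C, litSat I v l

/-- First-order formulas with equality. -/
inductive Fml (F V : Type) : Type where
  | eq : Term F V → Term F V → Fml F V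
  | not : Fml F V → Fml F V
  | and : Fml F V → Fml F V → Fml F V
  | or : Fml F V → Fml F V → Fml F V
  | imp : Fml F V → Fml F V → Fml F V
  | all : V → Fml F V → Fml F V
  | ex : V → Fml F V → Fml F V

/-- Tarskian satisfaction of a formula. -/
def Sat {F V : Type} [DecidableEq V] (I : Interp F) : (V → I.D) → Fml F V → Prop
  | v, Fml.eq s t => evalT I v s = evalT I v t
  | v, Fml.not φ => ¬ Sat I v φ
  | v, Fml.and φ ψ => Sat I v φ ∧ Sat I v ψ
  | v, Fml.or φ ψ => Sat I v φ ∨ Sat I v ψ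
  | v, Fml.imp φ ψ => Sat I v φ → Sat I v ψ
  | v, Fml.all x φ => ∀ d : I.D, Sat I (Function.update v x d) φ
  | v, Fml.ex x φ => ∃ d : I.D, Sat I (Function.update v x d) φ

/-- Applying a substitution to a term. -/
def applySubst {F V : Type} (σ : V → Term F V) : Term F V → Term F V
  | Term.var x => σ x
  | Term.app f ts => Term.app f (ts.attach.map fun t => applySubst σ t.1)
decreasing_by
  have := List.sizeOf_lt_of_mem t.2
  simp only [Term.app.sizeOf_spec] at *
  omega

/-- Applying a substitution to a literal. -/
def applyLit {F V : Type} (σ : V → Term F V) (l : Lit F V) : Lit F V :=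
  (l.1, applySubst σ l.2.1, applySubst σ l.2.2)

/-- Applying a substitution to a clause. -/
def applyClause {F V : Type} (σ : V → Term F V) (C : Clause F V) : Clause F V :=
  C.map (applyLit σ)

/-- The variable `x` occurs in the term. -/
inductive VarInT {F V : Type} (x : V) : Term F V → Prop where
  | here : VarInT x (Term.var x)
  | arg {f : F} {ts : List (Term F V)} {t : Term F V} :
      t ∈ ts → VarInT x t → VarInT x (Term.app f ts)

/-- The variable `x` occurs in the literal. -/
def VarInLit {F V : Type} (x : V) (l : Lit F V) : Prop :=
  VarInT x l.2.1 ∨ VarInT x l.2.2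

/-- The variable `x` occurs in the clause. -/
def VarInClause {F V : Type} (x : V) (C : Clause F V) : Prop :=
  ∃ l ∈ C, VarInLit x l

/-- The variable `x` occurs in the formula (free or bound). -/
def VarInFml {F V : Type} (x : V) : Fml F V → Prop
  | Fml.eq s t => VarInT x s ∨ VarInT x t
  | Fml.not φ => VarInFml x φ
  | Fml.and φ ψ => VarInFml x φ ∨ VarInFml x ψ
  | Fml.or φ ψ => VarInFml x φ ∨ VarInFml x ψ
  | Fml.imp φ ψ => VarInFml x φ ∨ VarInFml x ψ
  | Fml.all z φ => x = z ∨ VarInFml x φ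
  | Fml.ex z φ => x = z ∨ VarInFml x φ

/-- One-hole contexts for terms: `s[·]`. -/
inductive Ctx (F V : Type) : Type where
  | hole : Ctx F V
  | app : F → List (Term F V) → Ctx F V → List (Term F V) → Ctx F V

/-- Filling the hole of a context with a term. -/
def Ctx.fill {F V : Type} : Ctx F V → Term F V → Term F V
  | Ctx.hole, u => u
  | Ctx.app f pre c post, u => Term.app f (pre ++ c.fill u :: post)

/-- Program terms: terms together with the conditional constructor
`ite(l ≈ r, p, q)`. -/
inductive PTerm (F V : Type) : Type where
  | t : Term F V → PTerm F V
  | ite : Term F V → Term F V → PTerm F V → PTerm F V → PTerm F V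

open Classical in
/-- Evaluation of a program term: `ite(l ≈ r, p, q)` is interpreted as `p` if
`l ≈ r` holds and as `q` otherwise. -/
noncomputable def evalP {F V : Type} (I : Interp F) (v : V → I.D) : PTerm F V → I.D
  | PTerm.t u => evalT I v u
  | PTerm.ite l r p q =>
      if evalT I v l = evalT I v r then evalP I v p else evalP I v q

/-- Applying a substitution to a program term. -/
def applySubstP {F V : Type} (σ : V → Term F V) : PTerm F V → PTerm F V
  | PTerm.t u => PTerm.t (applySubst σ u)
  | PTerm.ite l r p q =>
      PTerm.ite (applySubst σ l) (applySubst σ r) (applySubstP σ p) (applySubstP σ q)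

/-- The variable `x` occurs in the program term. -/
def VarInP {F V : Type} (x : V) : PTerm F V → Prop
  | PTerm.t u => VarInT x u
  | PTerm.ite l r p q => VarInT x l ∨ VarInT x r ∨ VarInP x p ∨ VarInP x q

/-- Truth of the answer clause `C ◦ ⟨p⟩` (with a program-term answer) in `I`. -/
def AnsTrueP {F V : Type} [DecidableEq V] (I : Interp F) (Fm : Fml F V) (y : V)
    (C : Clause F V) (p : PTerm F V) : Prop :=
  ∀ v : V → I.D, clauseSat I v C ∨ Sat I (Function.update v y (evalP I v p)) Fm

theorem evalT_app' {F V : Type} (I : Interp F) (v : V → I.D) (f : F)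
    (ts : List (Term F V)) :
    evalT I v (Term.app f ts) = I.fn f (ts.map (evalT I v)) := by
  rw [evalT]
  congr 1
  rw [List.map_attach_eq_pmap]
  simp

theorem applySubst_app' {F V : Type} (σ : V → Term F V) (f : F)
    (ts : List (Term F V)) :
    applySubst σ (Term.app f ts) = Term.app f (ts.map (applySubst σ)) := by
  rw [applySubst]
  congr 1
  rw [List.map_attach_eq_pmap]
  simp

theorem evalT_congr {F V : Type} (I : Interp F) (v v' : V → I.D) :
    ∀ u : Term F V, (∀ x, VarInT x u → v x = v' x) → evalT I v u = evalT I v' u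
  | Term.var x, h => by rw [evalT, evalT]; exact h x VarInT.here
  | Term.app f ts, h => by
      rw [evalT_app', evalT_app']
      congr 1
      apply List.map_congr_left
      intro u hu
      exact evalT_congr I v v' u (fun x hx => h x (VarInT.arg hu hx))
decreasing_by
  have := List.sizeOf_lt_of_mem hu
  simp only [Term.app.sizeOf_spec] at *
  omega

theorem evalT_subst {F V : Type} (I : Interp F) (v : V → I.D) (σ : V → Term F V) :
    ∀ u : Term F V,
      evalT I v (applySubst σ u) = evalT I (fun x => evalT I v (σ x)) u
  | Term.var x => by rw [applySubst, evalT]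
  | Term.app f ts => by
      rw [applySubst_app', evalT_app', evalT_app', List.map_map]
      congr 1
      apply List.map_congr_left
      intro u hu
      exact evalT_subst I v σ u
decreasing_by
  have := List.sizeOf_lt_of_mem hu
  simp only [Term.app.sizeOf_spec] at *
  omega

theorem evalP_congr {F V : Type} (I : Interp F) (v v' : V → I.D) :
    ∀ P : PTerm F V, (∀ x, VarInP x P → v x = v' x) → evalP I v P = evalP I v' P
  | PTerm.t u, h => evalT_congr I v v' u h
  | PTerm.ite a b p q, h => by
      rw [evalP, evalP,
        evalT_congr I v v' a (fun x hx => h x (Or.inl hx)),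
        evalT_congr I v v' b (fun x hx => h x (Or.inr (Or.inl hx))),
        evalP_congr I v v' p (fun x hx => h x (Or.inr (Or.inr (Or.inl hx)))),
        evalP_congr I v v' q (fun x hx => h x (Or.inr (Or.inr (Or.inr hx))))]

theorem evalP_subst {F V : Type} (I : Interp F) (v : V → I.D) (σ : V → Term F V) :
    ∀ P : PTerm F V,
      evalP I v (applySubstP σ P) = evalP I (fun x => evalT I v (σ x)) P
  | PTerm.t u => by rw [applySubstP, evalP, evalP, evalT_subst]
  | PTerm.ite a b p q => by
      rw [applySubstP, evalP, evalP, evalT_subst, evalT_subst,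
        evalP_subst I v σ p, evalP_subst I v σ q]

theorem litSat_congr {F V : Type} (I : Interp F) (v v' : V → I.D) (L : Lit F V)
    (h : ∀ x, VarInLit x L → v x = v' x) : litSat I v L ↔ litSat I v' L := by
  obtain ⟨s, a, c⟩ := L
  unfold litSat
  rw [evalT_congr I v v' a (fun x hx => h x (Or.inl hx)),
    evalT_congr I v v' c (fun x hx => h x (Or.inr hx))]

theorem litSat_subst {F V : Type} (I : Interp F) (v : V → I.D) (σ : V → Term F V)
    (L : Lit F V) :
    litSat I v (applyLit σ L) ↔ litSat I (fun x => evalT I v (σ x)) L := by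
  obtain ⟨s, a, c⟩ := L
  unfold litSat applyLit
  rw [evalT_subst, evalT_subst]

theorem sat_congr {F V : Type} [DecidableEq V] (I : Interp F) :
    ∀ (φ : Fml F V) (v v' : V → I.D),
      (∀ x, VarInFml x φ → v x = v' x) → (Sat I v φ ↔ Sat I v' φ)
  | Fml.eq a c, v, v', h => by
      unfold Sat
      rw [evalT_congr I v v' a (fun x hx => h x (Or.inl hx)),
        evalT_congr I v v' c (fun x hx => h x (Or.inr hx))]
  | Fml.not φ, v, v', h => by
      unfold Sat; rw [sat_congr I φ v v' h]
  | Fml.and φ ψ, v, v', h => by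
      unfold Sat
      rw [sat_congr I φ v v' (fun x hx => h x (Or.inl hx)),
        sat_congr I ψ v v' (fun x hx => h x (Or.inr hx))]
  | Fml.or φ ψ, v, v', h => by
      unfold Sat
      rw [sat_congr I φ v v' (fun x hx => h x (Or.inl hx)),
        sat_congr I ψ v v' (fun x hx => h x (Or.inr hx))]
  | Fml.imp φ ψ, v, v', h => by
      unfold Sat
      rw [sat_congr I φ v v' (fun x hx => h x (Or.inl hx)),
        sat_congr I ψ v v' (fun x hx => h x (Or.inr hx))]
  | Fml.all z φ, v, v', h => by
      unfold Sat
      apply forall_congr'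
      intro d
      apply sat_congr I φ
      intro x hx
      rcases eq_or_ne x z with rfl | hne
      · simp [Function.update]
      · simp only [Function.update, dif_neg hne]
        exact h x (Or.inr hx)
  | Fml.ex z φ, v, v', h => by
      unfold Sat
      apply exists_congr
      intro d
      apply sat_congr I φ
      intro x hx
      rcases eq_or_ne x z with rfl | hne
      · simp [Function.update]
      · simp only [Function.update, dif_neg hne]
        exact h x (Or.inr hx)

theorem evalT_fill_congr {F V : Type} (I : Interp F) (w : V → I.D)
    {a c : Term F V} (h : evalT I w a = evalT I w c) :
    ∀ ctx : Ctx F V, evalT I w (ctx.fill a) = evalT I w (ctx.fill c)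
  | Ctx.hole => h
  | Ctx.app f pre ctx post => by
      rw [Ctx.fill, Ctx.fill, evalT_app', evalT_app']
      congr 1
      simp only [List.map_append, List.map_cons]
      rw [evalT_fill_congr I w h ctx]

/-- Soundness of conditional superposition `Sup_C`:
if `σ = mgu(l, l')`, the premises' variables are disjoint from those of
`F[ᾱ, y]`, and `I` satisfies the universal closures of
`(l ≈ r ∨ C) ∨ F[ᾱ, p]` and `(s[l'] ≐ t ∨ D) ∨ F[ᾱ, q]`, then `I` satisfies the
universal closure of `(s[r] ≐ t ∨ C ∨ D)σ ∨ F[ᾱ, ite(l ≈ r, q, p)σ]`. -/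
theorem sup_c_sound {F V : Type} [DecidableEq V]
    (I : Interp F) (Fm : Fml F V) (y : V)
    (l r l' t : Term F V) (s : Ctx F V) (b : Bool)
    (C D : Clause F V) (p q : PTerm F V)
    (hdisj : ∀ x : V,
      (VarInClause x ((true, l, r) :: C) ∨ VarInClause x ((b, s.fill l', t) :: D) ∨
        VarInP x p ∨ VarInP x q) → ¬ VarInFml x Fm)
    (σ : V → Term F V)
    (hunif : applySubst σ l = applySubst σ l')
    (hmgu : ∀ θ : V → Term F V, applySubst θ l = applySubst θ l' →
      ∃ τ : V → Term F V, ∀ x, applySubst τ (σ x) = θ x)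
    (H1 : AnsTrueP I Fm y ((true, l, r) :: C) p)
    (H2 : AnsTrueP I Fm y ((b, s.fill l', t) :: D) q) :
    AnsTrueP I Fm y (applyClause σ ((b, s.fill r, t) :: (C ++ D)))
      (applySubstP σ (PTerm.ite l r q p)) := by
  classical
  intro v
  set w : V → I.D := fun x => evalT I v (σ x) with hw
  set v' : V → I.D := fun x => if VarInFml x Fm then v x else w x with hv'
  have hvw : ∀ x, ¬ VarInFml x Fm → v' x = w x := by
    intro x h; simp [hv', h]
  have hvv : ∀ x, VarInFml x Fm → v' x = v x := by
    intro x h; simp [hv', h]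
  -- evaluation of the conditional answer term
  have hcond : evalP I v (applySubstP σ (PTerm.ite l r q p))
      = if evalT I w l = evalT I w r then evalP I w q else evalP I w p := by
    rw [applySubstP, evalP, evalT_subst, evalT_subst, evalP_subst, evalP_subst]
  have hll' : evalT I w l = evalT I w l' := by
    rw [hw]; rw [← evalT_subst, ← evalT_subst, hunif]
  -- updated assignments agree on Fm
  have hupd : ∀ d : I.D, Sat I (Function.update v' y d) Fm ↔
      Sat I (Function.update v y d) Fm := by
    intro d
    apply sat_congr
    intro x hx
    rcases eq_or_ne x y with rfl | hne
    · simp [Function.update]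
    · simp only [Function.update, dif_neg hne]
      exact hvv x hx
  by_cases hc : evalT I w l = evalT I w r
  · -- condition true: use the second premise
    rcases H2 v' with ⟨L, hL, hLs⟩ | h
    · left
      have hLw : litSat I w L := by
        rw [← litSat_congr I v' w L (fun x hx => hvw x
          (hdisj x (Or.inr (Or.inl ⟨L, hL, hx⟩))))]
        exact hLs
      rcases List.mem_cons.mp hL with rfl | hLD
      · -- the superposed literal
        refine ⟨applyLit σ (b, s.fill r, t), ?_, ?_⟩
        · exact List.mem_cons_self
        · rw [litSat_subst]
          have hfill : evalT I w (s.fill l') = evalT I w (s.fill r) :=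
            evalT_fill_congr I w (hll' ▸ hc) s
          unfold litSat at hLw ⊢
          simpa [← hw, ← hfill] using hLw
      · exact ⟨applyLit σ L, List.mem_cons_of_mem _
          (List.mem_map_of_mem (List.mem_append_right C hLD)),
          (litSat_subst I v σ L).mpr hLw⟩
    · right
      rw [hcond, if_pos hc]
      have hq : evalP I v' q = evalP I w q :=
        evalP_congr I v' w q (fun x hx => hvw x (hdisj x (Or.inr (Or.inr (Or.inr hx)))))
      rw [← hupd, ← hq]
      exact h
  · -- condition false: use the first premise
    rcases H1 v' with ⟨L, hL, hLs⟩ | h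
    · have hLw : litSat I w L := by
        rw [← litSat_congr I v' w L (fun x hx => hvw x
          (hdisj x (Or.inl ⟨L, hL, hx⟩)))]
        exact hLs
      rcases List.mem_cons.mp hL with rfl | hLC
      · exact absurd hLw hc
      · left
        exact ⟨applyLit σ L, List.mem_cons_of_mem _
          (List.mem_map_of_mem (List.mem_append_left D hLC)),
          (litSat_subst I v σ L).mpr hLw⟩
    · right
      rw [hcond, if_neg hc]
      have hp : evalP I v' p = evalP I w p :=
        evalP_congr I v' w p (fun x hx => hvw x (hdisj x (Or.inr (Or.inr (Or.inl hx)))))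
      rw [← hupd, ← hp]
      exact h
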